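/- arXiv:2305.01391 — 5 statements merged into one kernel-verified Lean document; each statement's English description precedes it below -/
import Mathlib

section
/- Suppose h satisfies h·(h')³/h'' = c³ for a nonzero constant c on an interval where h' ≠ 0 and h'' ≠ 0. Then the function h²/c² + 2c/h' is constant on that interval. -/
/-- If `h (h')³ / h'' = c³` on an interval where `h' ≠ 0` and `h'' ≠ 0`
(with `c ≠ 0`), then `h²/c² + 2c/h'` is constant on that interval. -/
theorem stmt1 (h : ℝ → ℝ) (a b c : ℝ) (hc : c ≠ 0) (hsmooth : ContDiff ℝ (⊤ : ℕ∞) h)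
    (hd1 : ∀ x ∈ Set.Ioo a b, deriv h x ≠ 0)
    (hd2 : ∀ x ∈ Set.Ioo a b, deriv (deriv h) x ≠ 0)
    (hODE : ∀ x ∈ Set.Ioo a b,
      h x * (deriv h x) ^ 3 / deriv (deriv h) x = c ^ 3) :
    ∃ K : ℝ, ∀ x ∈ Set.Ioo a b,
      (h x) ^ 2 / c ^ 2 + 2 * c / deriv h x = K := by
  set F : ℝ → ℝ := fun x => (h x) ^ 2 / c ^ 2 + 2 * c / deriv h x with hF
  have hdh : Differentiable ℝ h := hsmooth.differentiable (by simp)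
  have hdh1 : Differentiable ℝ (deriv h) :=
    (contDiff_infty_iff_deriv.mp (hsmooth.of_le (by simp))).2.differentiable (by simp)
  have key : ∀ x ∈ Set.Ioo a b, HasDerivAt F 0 x := by
    intro x hx
    have h1 := hd1 x hx
    have h2 := hd2 x hx
    have hode := hODE x hx
    have hode' : h x * (deriv h x) ^ 3 = c ^ 3 * deriv (deriv h) x := by
      field_simp at hode; linarith
    have A : HasDerivAt (fun y => (h y) ^ 2 / c ^ 2)
        (2 * h x * deriv h x / c ^ 2) x := by
      have := ((hdh x).hasDerivAt.pow 2).div_const (c ^ 2)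
      simpa [mul_comm, mul_assoc, mul_left_comm] using this
    have B : HasDerivAt (fun y => 2 * c / deriv h y)
        (-(2 * c * deriv (deriv h) x) / (deriv h x) ^ 2) x := by
      have := (hasDerivAt_const x (2 * c)).div (hdh1 x).hasDerivAt h1
      exact this.congr_deriv (by ring)
    have C := A.add B
    have hzero : 2 * h x * deriv h x / c ^ 2 +
        -(2 * c * deriv (deriv h) x) / (deriv h x) ^ 2 = 0 := by
      field_simp
      nlinarith [hode', sq_nonneg (deriv h x), sq_nonneg c]
    rw [hzero] at C
    exact C
  rcases Set.eq_empty_or_nonempty (Set.Ioo a b) with he | ⟨x₀, hx₀⟩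
  · exact ⟨0, fun x hx => absurd hx (by simp [he])⟩
  refine ⟨F x₀, fun x hx => ?_⟩
  have hdiff : DifferentiableOn ℝ F (Set.Ioo a b) := fun y hy =>
    ((key y hy).differentiableAt).differentiableWithinAt
  have hfd : ∀ y ∈ Set.Ioo a b, fderivWithin ℝ F (Set.Ioo a b) y = 0 := by
    intro y hy
    have := ((key y hy).hasFDerivAt.hasFDerivWithinAt (s := Set.Ioo a b)).fderivWithin
      (isOpen_Ioo.uniqueDiffWithinAt hy)
    rw [this]
    ext; simp
  exact (convex_Ioo a b).is_const_of_fderivWithin_eq_zero hdiff hfd hx hx₀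
end

section
/- Suppose h : ℝ → ℝ is differentiable on an interval and satisfies h'(x) = 2c³/(κc² − h(x)²) with κc² − h(x)² ≠ 0, where c ≠ 0. Then for some constant α, h satisfies the cubic equation h(x)³ − 3κc²·h(x) + 6c³(x + α) = 0 for all x in the interval. -/
/-!
Along a solution of `h' = r / (q - h²)` the cubic `h³ - 3 q h + 3 r x` is a first integral:
its derivative is `-3 (q - h²) h' + 3 r = 0`. It is therefore constant on the connected interval,
and with `q = κ c²`, `r = 2 c³` that constant can be written as `-6 c³ α` because `c ≠ 0`.
-/

theorem HasDerivAt.cubic_first_integral {h : ℝ → ℝ} {q r x : ℝ} (hq : q - h x ^ 2 ≠ 0)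
    (hh : HasDerivAt h (r / (q - h x ^ 2)) x) :
    HasDerivAt (fun y => h y ^ 3 - 3 * q * h y + 3 * r * y) 0 x := by
  have hd : HasDerivAt (fun y => h y ^ 3 - 3 * q * h y + 3 * r * y)
      (3 * h x ^ 2 * (r / (q - h x ^ 2)) - 3 * q * (r / (q - h x ^ 2)) + 3 * r * 1) x :=
    ((hh.fun_pow 3).sub (hh.const_mul (3 * q))).add ((hasDerivAt_id x).const_mul (3 * r))
  convert hd using 1
  field_simp
  ring

theorem IsOpen.exists_cubic_first_integral_eq {h : ℝ → ℝ} {q r : ℝ} {s : Set ℝ} (hs : IsOpen s)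
    (hs' : IsPreconnected s) (hq : ∀ x ∈ s, q - h x ^ 2 ≠ 0)
    (hh : ∀ x ∈ s, HasDerivAt h (r / (q - h x ^ 2)) x) :
    ∃ C, ∀ x ∈ s, h x ^ 3 - 3 * q * h x + 3 * r * x = C := by
  have hF : ∀ x ∈ s, HasDerivAt (fun y => h y ^ 3 - 3 * q * h y + 3 * r * y) 0 x :=
    fun x hx => (hh x hx).cubic_first_integral (hq x hx)
  exact hs.exists_is_const_of_deriv_eq_zero hs'
    (fun x hx => (hF x hx).differentiableAt.differentiableWithinAt) fun x hx => (hF x hx).deriv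

/-- If `h' = 2c³/(κc² − h²)` on an interval, with `c ≠ 0` and
`κc² − h² ≠ 0` there, then for some constant `α`,
`h³ − 3κc²h + 6c³(x + α) = 0` on the interval. -/
theorem stmt2 (h : ℝ → ℝ) (a b c κ : ℝ) (hc : c ≠ 0)
    (hne : ∀ x ∈ Set.Ioo a b, κ * c ^ 2 - (h x) ^ 2 ≠ 0)
    (hODE : ∀ x ∈ Set.Ioo a b,
      HasDerivAt h (2 * c ^ 3 / (κ * c ^ 2 - (h x) ^ 2)) x) :
    ∃ α : ℝ, ∀ x ∈ Set.Ioo a b,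
      (h x) ^ 3 - 3 * κ * c ^ 2 * h x + 6 * c ^ 3 * (x + α) = 0 := by
  obtain ⟨C, hC⟩ := isOpen_Ioo.exists_cubic_first_integral_eq isPreconnected_Ioo hne hODE
  refine ⟨-C / (6 * c ^ 3), fun x hx => ?_⟩
  field_simp
  linear_combination hC x hx
end

section
/- If h satisfies h'(x) = 2c³/(κc² − h(x)²) on an interval with c ≠ 0 and κc² − h(x)² ≠ 0, then h satisfies the third-order ODE h'''·h'·h − 3(h'')²·h − h''·(h')² = 0 on that interval. -/
open Set

/-! With `D = m - u²`, the equation `h' = k / D(h)` makes every derivative of `h` a rational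
function of `h`: `h'' = 2k²h / D³` and `h''' = 2k³(m + 5h²) / D⁵`. Substituting these, the
third-order expression becomes `k⁴h / D⁶ · (2(m + 5h²) - 12h² - 2D)`, which vanishes
identically. -/

variable {𝕜 : Type*} [NontriviallyNormedField 𝕜]

theorem hasDerivAt_deriv_of_forall_hasDerivAt_comp {f g G : 𝕜 → 𝕜} {U : Set 𝕜} {x G' g' : 𝕜}
    (hU : IsOpen U) (hf : ∀ y ∈ U, HasDerivAt f (G (g y)) y) (hx : x ∈ U)
    (hG : HasDerivAt G G' (g x)) (hg : HasDerivAt g g' x) :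
    HasDerivAt (deriv f) (G' * g') x := by
  refine (hG.comp x hg).congr_of_eventuallyEq ?_
  filter_upwards [hU.mem_nhds hx] with y hy
  exact (hf y hy).deriv

theorem hasDerivAt_div_sub_sq (k m u : 𝕜) (hu : m - u ^ 2 ≠ 0) :
    HasDerivAt (fun v => k / (m - v ^ 2)) (2 * k * u / (m - u ^ 2) ^ 2) u := by
  refine ((hasDerivAt_const u k).fun_div ((hasDerivAt_pow 2 u).const_sub m) hu).congr_deriv ?_
  field_simp
  ring

theorem hasDerivAt_mul_div_sub_sq_pow_three (k m u : 𝕜) (hu : m - u ^ 2 ≠ 0) :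
    HasDerivAt (fun v => k * v / (m - v ^ 2) ^ 3)
      (k * (m + 5 * u ^ 2) / (m - u ^ 2) ^ 4) u := by
  refine (((hasDerivAt_id' u).const_mul k).fun_div (((hasDerivAt_pow 2 u).const_sub m).fun_pow 3)
    (pow_ne_zero 3 hu)).congr_deriv ?_
  field_simp
  ring

theorem third_order_expr_eq_zero (k m u : 𝕜) (hu : m - u ^ 2 ≠ 0) :
    2 * k ^ 2 * (m + 5 * u ^ 2) / (m - u ^ 2) ^ 4 * (k / (m - u ^ 2)) * (k / (m - u ^ 2)) * u
      - 3 * (2 * k ^ 2 * u / (m - u ^ 2) ^ 3) ^ 2 * u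
      - 2 * k ^ 2 * u / (m - u ^ 2) ^ 3 * (k / (m - u ^ 2)) ^ 2 = 0 := by
  field_simp
  ring

theorem stmt3_general (h : ℝ → ℝ) (a b c κ : ℝ)
    (hne : ∀ x ∈ Set.Ioo a b, κ * c ^ 2 - (h x) ^ 2 ≠ 0)
    (hODE : ∀ x ∈ Set.Ioo a b,
      HasDerivAt h (2 * c ^ 3 / (κ * c ^ 2 - (h x) ^ 2)) x) :
    ∀ x ∈ Set.Ioo a b,
      deriv (deriv (deriv h)) x * deriv h x * h x
        - 3 * (deriv (deriv h) x) ^ 2 * h x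
        - deriv (deriv h) x * (deriv h x) ^ 2 = 0 := by
  set k := 2 * c ^ 3
  set m := κ * c ^ 2
  have hderiv2 : ∀ y ∈ Ioo a b,
      HasDerivAt (deriv h) (2 * k ^ 2 * h y / (m - h y ^ 2) ^ 3) y := fun y hy =>
    (hasDerivAt_deriv_of_forall_hasDerivAt_comp (G := fun u => k / (m - u ^ 2)) isOpen_Ioo hODE hy
      (hasDerivAt_div_sub_sq k m _ (hne y hy)) (hODE y hy)).congr_deriv (by field_simp [hne y hy])
  intro x hx
  have hderiv3 := hasDerivAt_deriv_of_forall_hasDerivAt_comp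
    (G := fun u => 2 * k ^ 2 * u / (m - u ^ 2) ^ 3) isOpen_Ioo hderiv2 hx
    (hasDerivAt_mul_div_sub_sq_pow_three _ m _ (hne x hx)) (hODE x hx)
  rw [hderiv3.deriv, (hderiv2 x hx).deriv, (hODE x hx).deriv]
  exact third_order_expr_eq_zero k m (h x) (hne x hx)

/-- If `h' = 2c³/(κc² − h²)` on an interval, with `c ≠ 0` and
`κc² − h² ≠ 0` there, then `h''' h' h − 3 (h'')² h − h'' (h')² = 0` on that interval. -/
theorem stmt3 (h : ℝ → ℝ) (a b c κ : ℝ) (hc : c ≠ 0)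
    (hne : ∀ x ∈ Set.Ioo a b, κ * c ^ 2 - (h x) ^ 2 ≠ 0)
    (hODE : ∀ x ∈ Set.Ioo a b,
      HasDerivAt h (2 * c ^ 3 / (κ * c ^ 2 - (h x) ^ 2)) x) :
    ∀ x ∈ Set.Ioo a b,
      deriv (deriv (deriv h)) x * deriv h x * h x
        - 3 * (deriv (deriv h) x) ^ 2 * h x
        - deriv (deriv h) x * (deriv h x) ^ 2 = 0 :=
  stmt3_general h a b c κ hne hODE
end

section
/- The pullback of the split metric dS² = 2dc₁dc₅ + 2dc₂dc₄ under the map φ : (c₁,c₂,c₄,c₅) ↦ ((c₁c₅+c₂c₄)/(3c₄), c₅/c₄, c₁/c₄, −3/c₄) equals (1/c₄²)·dS², i.e. φ is a conformal transformation with conformal factor 1/c₄². Equivalently, 2d((c₁c₅+c₂c₄)/(3c₄))·d(−3/c₄) + 2d(c₅/c₄)·d(c₁/c₄) = (1/c₄²)(2dc₁dc₅ + 2dc₂dc₄). -/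
open ContinuousLinearMap

theorem HasFDerivAt.div {𝕜 E : Type*} [NontriviallyNormedField 𝕜] [NormedAddCommGroup E]
    [NormedSpace 𝕜 E] {c d : E → 𝕜} {c' d' : E →L[𝕜] 𝕜} {x : E}
    (hc : HasFDerivAt c c' x) (hd : HasFDerivAt d d' x) (hx : d x ≠ 0) :
    HasFDerivAt (fun y => c y / d y) ((d x ^ 2)⁻¹ • (d x • c' - c x • d')) x := by
  simp only [div_eq_mul_inv]
  refine (hc.fun_mul ((hasDerivAt_inv hx).comp_hasFDerivAt x hd)).congr_fderiv ?_
  ext u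
  simp only [Function.comp_apply, add_apply, smul_apply, sub_apply, smul_eq_mul]
  field_simp
  ring

/-- φ is conformal for `dS² = 2dc₁dc₅ + 2dc₂dc₄` with factor `1/c₄²`:
the pullback quadratic form evaluated on any tangent vector `u` at a point `x`
with `c₄ ≠ 0` equals `(1/c₄²)(2u₁u₅ + 2u₂u₄)`.  Coordinates `(c₁,c₂,c₄,c₅)` are
indices `(0,1,2,3)`. -/
theorem stmt7 (x : Fin 4 → ℝ) (hx : x 2 ≠ 0) (u : Fin 4 → ℝ) :
    2 * (fderiv ℝ (fun y : Fin 4 → ℝ => (y 0 * y 3 + y 1 * y 2) / (3 * y 2)) x u) *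
          (fderiv ℝ (fun y : Fin 4 → ℝ => -3 / y 2) x u)
      + 2 * (fderiv ℝ (fun y : Fin 4 → ℝ => y 3 / y 2) x u) *
          (fderiv ℝ (fun y : Fin 4 → ℝ => y 0 / y 2) x u)
      = (1 / (x 2) ^ 2) * (2 * u 0 * u 3 + 2 * u 1 * u 2) := by
  have coord (i : Fin 4) := hasFDerivAt_apply (𝕜 := ℝ) i x
  have h3x : 3 * x 2 ≠ 0 := by positivity
  have hnum := ((coord 0).fun_mul (coord 3)).fun_add ((coord 1).fun_mul (coord 2))
  rw [(hnum.div ((coord 2).const_mul 3) h3x).fderiv,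
    ((hasFDerivAt_const (-3 : ℝ) x).div (coord 2) hx).fderiv,
    ((coord 3).div (coord 2) hx).fderiv, ((coord 0).div (coord 2) hx).fderiv]
  simp only [smul_apply, sub_apply, add_apply, smul_eq_mul, proj_apply, zero_apply]
  field_simp
  ring
end

section
/- The eight vector fields L¹ = −6∂_{c₁}, L² = 6∂_{c₂}, L³ = 6(c₁∂_{c₂} − c₄∂_{c₅}), L⁴ = 6c₁(c₁∂_{c₁}+c₂∂_{c₂}+c₄∂_{c₄}) − 6c₂c₄∂_{c₅}, L⁵ = −6c₂(c₁∂_{c₁}+c₂∂_{c₂}+c₅∂_{c₅}) + 6c₁c₅∂_{c₄}, L⁶ = 6(c₂∂_{c₁} − c₅∂_{c₄}), H₁ = −6(c₂∂_{c₂} − (1/3)c₄∂_{c₄} + (2/3)c₅∂_{c₅}), H₂ = −6(c₁∂_{c₁}+c₂∂_{c₂}+(1/3)c₄∂_{c₄}+(1/3)c₅∂_{c₅}) on ℝ⁴ span a Lie algebra under the Lie bracket of vector fields, i.e. the bracket of any two of them is a real linear combination of the eight; moreover this Lie algebra is 8-dimensional. -/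
/-- Lie bracket of vector fields on ℝⁿ (as maps `(Fin n → ℝ) → (Fin n → ℝ)`). -/
noncomputable def vfBracket {n : ℕ} (X Y : (Fin n → ℝ) → (Fin n → ℝ)) :
    (Fin n → ℝ) → (Fin n → ℝ) :=
  fun x => fderiv ℝ Y x (X x) - fderiv ℝ X x (Y x)

/-- The eight vector fields on ℝ⁴, coordinates (c₁,c₂,c₄,c₅) = indices (0,1,2,3):
L¹,L²,L³,L⁴,L⁵,L⁶,H₁,H₂. -/
noncomputable def slFields : Fin 8 → (Fin 4 → ℝ) → (Fin 4 → ℝ)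
  | 0 => fun _ => ![-6, 0, 0, 0]
  | 1 => fun _ => ![0, 6, 0, 0]
  | 2 => fun x => ![0, 6 * x 0, 0, -6 * x 2]
  | 3 => fun x => ![6 * x 0 * x 0, 6 * x 0 * x 1, 6 * x 0 * x 2, -6 * x 1 * x 2]
  | 4 => fun x => ![-6 * x 1 * x 0, -6 * x 1 * x 1, 6 * x 0 * x 3, -6 * x 1 * x 3]
  | 5 => fun x => ![6 * x 1, 0, -6 * x 3, 0]
  | 6 => fun x => ![0, -6 * x 1, 6 * (1/3 : ℝ) * x 2, -6 * (2/3 : ℝ) * x 3]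
  | 7 => fun x => ![-6 * x 0, -6 * x 1, -6 * (1/3 : ℝ) * x 2, -6 * (1/3 : ℝ) * x 3]

open ContinuousLinearMap in
noncomputable def lin (c : ℝ) (i : Fin 4) : (Fin 4 → ℝ) →L[ℝ] ℝ := c • proj i

open ContinuousLinearMap in
noncomputable def quad (c : ℝ) (i j : Fin 4) (x : Fin 4 → ℝ) : (Fin 4 → ℝ) →L[ℝ] ℝ :=
  (c * x i) • proj j + x j • (c • proj i)

lemma hasFDerivAt_lin (c : ℝ) (i : Fin 4) (x : Fin 4 → ℝ) :
    HasFDerivAt (fun x : Fin 4 → ℝ => c * x i) (lin c i) x :=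
  (hasFDerivAt_apply i x).const_mul c

lemma hasFDerivAt_quad (c : ℝ) (i j : Fin 4) (x : Fin 4 → ℝ) :
    HasFDerivAt (fun x : Fin 4 → ℝ => c * x i * x j) (quad c i j x) x :=
  ((hasFDerivAt_apply i x).const_mul c).mul (hasFDerivAt_apply j x)

@[simp] lemma lin_apply (c : ℝ) (i : Fin 4) (v : Fin 4 → ℝ) : lin c i v = c * v i := by
  simp [lin]

@[simp] lemma quad_apply (c : ℝ) (i j : Fin 4) (x v : Fin 4 → ℝ) :
    quad c i j x v = c * x i * v j + x j * (c * v i) := by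
  simp [quad]

/-- Explicit total derivatives of the eight fields. -/
noncomputable def slD : Fin 8 → (Fin 4 → ℝ) → (Fin 4 → ℝ) →L[ℝ] (Fin 4 → ℝ)
  | 0 => fun _ => 0
  | 1 => fun _ => 0
  | 2 => fun _ => ContinuousLinearMap.pi ![0, lin 6 0, 0, lin (-6) 2]
  | 3 => fun x => ContinuousLinearMap.pi
      ![quad 6 0 0 x, quad 6 0 1 x, quad 6 0 2 x, quad (-6) 1 2 x]
  | 4 => fun x => ContinuousLinearMap.pi
      ![quad (-6) 1 0 x, quad (-6) 1 1 x, quad 6 0 3 x, quad (-6) 1 3 x]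
  | 5 => fun _ => ContinuousLinearMap.pi ![lin 6 1, 0, lin (-6) 3, 0]
  | 6 => fun _ => ContinuousLinearMap.pi
      ![0, lin (-6) 1, lin (6 * (1/3)) 2, lin (-6 * (2/3)) 3]
  | 7 => fun _ => ContinuousLinearMap.pi
      ![lin (-6) 0, lin (-6) 1, lin (-6 * (1/3)) 2, lin (-6 * (1/3)) 3]

lemma hasD (i : Fin 8) (x : Fin 4 → ℝ) : HasFDerivAt (slFields i) (slD i x) x := by
  fin_cases i
  · exact hasFDerivAt_const _ _
  · exact hasFDerivAt_const _ _
  all_goals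
    refine hasFDerivAt_pi.mpr fun k => ?_
  all_goals
    fin_cases k <;>
    first
      | exact hasFDerivAt_const _ _
      | exact hasFDerivAt_lin _ _ _
      | exact hasFDerivAt_quad _ _ _ _

lemma fderiv_slFields (i : Fin 8) (x : Fin 4 → ℝ) :
    fderiv ℝ (slFields i) x = slD i x := (hasD i x).fderiv

@[simp] lemma cons_val_five' {α : Type*} (a b c d e f g h : α) : ![a,b,c,d,e,f,g,h] 5 = f := rfl
@[simp] lemma cons_val_six' {α : Type*} (a b c d e f g h : α) : ![a,b,c,d,e,f,g,h] 6 = g := rfl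
@[simp] lemma cons_val_seven' {α : Type*} (a b c d e f g h : α) : ![a,b,c,d,e,f,g,h] 7 = h := rfl
@[simp] lemma cons_val_four' {α : Type*} (a b c d e f g h : α) : ![a,b,c,d,e,f,g,h] 4 = e := rfl


private lemma key (i j : Fin 8) (a : Fin 8 → ℝ) (x : Fin 4 → ℝ)
    (h0 : slD j x (slFields i x) 0 - slD i x (slFields j x) 0
        = ∑ m, a m • slFields m x 0 := by
      simp only [slFields, slD, Fin.sum_univ_eight, ContinuousLinearMap.pi_apply,
        ContinuousLinearMap.zero_apply, lin_apply, quad_apply, Matrix.cons_val_zero,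
        Matrix.cons_val_one, Matrix.head_cons, Matrix.cons_val_two, Matrix.tail_cons,
        Matrix.cons_val_three, cons_val_four', cons_val_five', cons_val_six',
        cons_val_seven', smul_eq_mul, Fin.isValue, Pi.zero_apply]; ring)
    (h1 : slD j x (slFields i x) 1 - slD i x (slFields j x) 1
        = ∑ m, a m • slFields m x 1 := by
      simp only [slFields, slD, Fin.sum_univ_eight, ContinuousLinearMap.pi_apply,
        ContinuousLinearMap.zero_apply, lin_apply, quad_apply, Matrix.cons_val_zero,
        Matrix.cons_val_one, Matrix.head_cons, Matrix.cons_val_two, Matrix.tail_cons,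
        Matrix.cons_val_three, cons_val_four', cons_val_five', cons_val_six',
        cons_val_seven', smul_eq_mul, Fin.isValue, Pi.zero_apply]; ring)
    (h2 : slD j x (slFields i x) 2 - slD i x (slFields j x) 2
        = ∑ m, a m • slFields m x 2 := by
      simp only [slFields, slD, Fin.sum_univ_eight, ContinuousLinearMap.pi_apply,
        ContinuousLinearMap.zero_apply, lin_apply, quad_apply, Matrix.cons_val_zero,
        Matrix.cons_val_one, Matrix.head_cons, Matrix.cons_val_two, Matrix.tail_cons,
        Matrix.cons_val_three, cons_val_four', cons_val_five', cons_val_six',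
        cons_val_seven', smul_eq_mul, Fin.isValue, Pi.zero_apply]; ring)
    (h3 : slD j x (slFields i x) 3 - slD i x (slFields j x) 3
        = ∑ m, a m • slFields m x 3 := by
      simp only [slFields, slD, Fin.sum_univ_eight, ContinuousLinearMap.pi_apply,
        ContinuousLinearMap.zero_apply, lin_apply, quad_apply, Matrix.cons_val_zero,
        Matrix.cons_val_one, Matrix.head_cons, Matrix.cons_val_two, Matrix.tail_cons,
        Matrix.cons_val_three, cons_val_four', cons_val_five', cons_val_six',
        cons_val_seven', smul_eq_mul, Fin.isValue, Pi.zero_apply]; ring) :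
    vfBracket (slFields i) (slFields j) x = ∑ m, a m • slFields m x := by
  funext k
  have key4 : ∀ k : Fin 4, slD j x (slFields i x) k - slD i x (slFields j x) k
      = ∑ m, a m • slFields m x k := by
    intro k; fin_cases k <;> assumption
  have := key4 k
  simpa [vfBracket, fderiv_slFields, Finset.sum_apply, Pi.smul_apply, Pi.sub_apply] using this

set_option maxHeartbeats 16000000 in
private lemma part1 : ∀ i j : Fin 8, ∃ a : Fin 8 → ℝ, ∀ x : Fin 4 → ℝ,
    vfBracket (slFields i) (slFields j) x = ∑ k, a k • slFields k x
  | 0, 0 => ⟨![(0 : ℝ), (0 : ℝ), (0 : ℝ), (0 : ℝ), (0 : ℝ), (0 : ℝ), (0 : ℝ), (0 : ℝ)], fun x => key _ _ _ _⟩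
  | 0, 1 => ⟨![(0 : ℝ), (0 : ℝ), (0 : ℝ), (0 : ℝ), (0 : ℝ), (0 : ℝ), (0 : ℝ), (0 : ℝ)], fun x => key _ _ _ _⟩
  | 0, 2 => ⟨![(0 : ℝ), (-6 : ℝ), (0 : ℝ), (0 : ℝ), (0 : ℝ), (0 : ℝ), (0 : ℝ), (0 : ℝ)], fun x => key _ _ _ _⟩
  | 0, 3 => ⟨![(0 : ℝ), (0 : ℝ), (0 : ℝ), (0 : ℝ), (0 : ℝ), (0 : ℝ), (-6 : ℝ), (12 : ℝ)], fun x => key _ _ _ _⟩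
  | 0, 4 => ⟨![(0 : ℝ), (0 : ℝ), (0 : ℝ), (0 : ℝ), (0 : ℝ), (6 : ℝ), (0 : ℝ), (0 : ℝ)], fun x => key _ _ _ _⟩
  | 0, 5 => ⟨![(0 : ℝ), (0 : ℝ), (0 : ℝ), (0 : ℝ), (0 : ℝ), (0 : ℝ), (0 : ℝ), (0 : ℝ)], fun x => key _ _ _ _⟩
  | 0, 6 => ⟨![(0 : ℝ), (0 : ℝ), (0 : ℝ), (0 : ℝ), (0 : ℝ), (0 : ℝ), (0 : ℝ), (0 : ℝ)], fun x => key _ _ _ _⟩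
  | 0, 7 => ⟨![(-6 : ℝ), (0 : ℝ), (0 : ℝ), (0 : ℝ), (0 : ℝ), (0 : ℝ), (0 : ℝ), (0 : ℝ)], fun x => key _ _ _ _⟩
  | 1, 0 => ⟨![(0 : ℝ), (0 : ℝ), (0 : ℝ), (0 : ℝ), (0 : ℝ), (0 : ℝ), (0 : ℝ), (0 : ℝ)], fun x => key _ _ _ _⟩
  | 1, 1 => ⟨![(0 : ℝ), (0 : ℝ), (0 : ℝ), (0 : ℝ), (0 : ℝ), (0 : ℝ), (0 : ℝ), (0 : ℝ)], fun x => key _ _ _ _⟩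
  | 1, 2 => ⟨![(0 : ℝ), (0 : ℝ), (0 : ℝ), (0 : ℝ), (0 : ℝ), (0 : ℝ), (0 : ℝ), (0 : ℝ)], fun x => key _ _ _ _⟩
  | 1, 3 => ⟨![(0 : ℝ), (0 : ℝ), (6 : ℝ), (0 : ℝ), (0 : ℝ), (0 : ℝ), (0 : ℝ), (0 : ℝ)], fun x => key _ _ _ _⟩
  | 1, 4 => ⟨![(0 : ℝ), (0 : ℝ), (0 : ℝ), (0 : ℝ), (0 : ℝ), (0 : ℝ), (6 : ℝ), (6 : ℝ)], fun x => key _ _ _ _⟩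
  | 1, 5 => ⟨![(-6 : ℝ), (0 : ℝ), (0 : ℝ), (0 : ℝ), (0 : ℝ), (0 : ℝ), (0 : ℝ), (0 : ℝ)], fun x => key _ _ _ _⟩
  | 1, 6 => ⟨![(0 : ℝ), (-6 : ℝ), (0 : ℝ), (0 : ℝ), (0 : ℝ), (0 : ℝ), (0 : ℝ), (0 : ℝ)], fun x => key _ _ _ _⟩
  | 1, 7 => ⟨![(0 : ℝ), (-6 : ℝ), (0 : ℝ), (0 : ℝ), (0 : ℝ), (0 : ℝ), (0 : ℝ), (0 : ℝ)], fun x => key _ _ _ _⟩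
  | 2, 0 => ⟨![(0 : ℝ), (6 : ℝ), (0 : ℝ), (0 : ℝ), (0 : ℝ), (0 : ℝ), (0 : ℝ), (0 : ℝ)], fun x => key _ _ _ _⟩
  | 2, 1 => ⟨![(0 : ℝ), (0 : ℝ), (0 : ℝ), (0 : ℝ), (0 : ℝ), (0 : ℝ), (0 : ℝ), (0 : ℝ)], fun x => key _ _ _ _⟩
  | 2, 2 => ⟨![(0 : ℝ), (0 : ℝ), (0 : ℝ), (0 : ℝ), (0 : ℝ), (0 : ℝ), (0 : ℝ), (0 : ℝ)], fun x => key _ _ _ _⟩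
  | 2, 3 => ⟨![(0 : ℝ), (0 : ℝ), (0 : ℝ), (0 : ℝ), (0 : ℝ), (0 : ℝ), (0 : ℝ), (0 : ℝ)], fun x => key _ _ _ _⟩
  | 2, 4 => ⟨![(0 : ℝ), (0 : ℝ), (0 : ℝ), (-6 : ℝ), (0 : ℝ), (0 : ℝ), (0 : ℝ), (0 : ℝ)], fun x => key _ _ _ _⟩
  | 2, 5 => ⟨![(0 : ℝ), (0 : ℝ), (0 : ℝ), (0 : ℝ), (0 : ℝ), (0 : ℝ), (12 : ℝ), (-6 : ℝ)], fun x => key _ _ _ _⟩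
  | 2, 6 => ⟨![(0 : ℝ), (0 : ℝ), (-6 : ℝ), (0 : ℝ), (0 : ℝ), (0 : ℝ), (0 : ℝ), (0 : ℝ)], fun x => key _ _ _ _⟩
  | 2, 7 => ⟨![(0 : ℝ), (0 : ℝ), (0 : ℝ), (0 : ℝ), (0 : ℝ), (0 : ℝ), (0 : ℝ), (0 : ℝ)], fun x => key _ _ _ _⟩
  | 3, 0 => ⟨![(0 : ℝ), (0 : ℝ), (0 : ℝ), (0 : ℝ), (0 : ℝ), (0 : ℝ), (6 : ℝ), (-12 : ℝ)], fun x => key _ _ _ _⟩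
  | 3, 1 => ⟨![(0 : ℝ), (0 : ℝ), (-6 : ℝ), (0 : ℝ), (0 : ℝ), (0 : ℝ), (0 : ℝ), (0 : ℝ)], fun x => key _ _ _ _⟩
  | 3, 2 => ⟨![(0 : ℝ), (0 : ℝ), (0 : ℝ), (0 : ℝ), (0 : ℝ), (0 : ℝ), (0 : ℝ), (0 : ℝ)], fun x => key _ _ _ _⟩
  | 3, 3 => ⟨![(0 : ℝ), (0 : ℝ), (0 : ℝ), (0 : ℝ), (0 : ℝ), (0 : ℝ), (0 : ℝ), (0 : ℝ)], fun x => key _ _ _ _⟩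
  | 3, 4 => ⟨![(0 : ℝ), (0 : ℝ), (0 : ℝ), (0 : ℝ), (0 : ℝ), (0 : ℝ), (0 : ℝ), (0 : ℝ)], fun x => key _ _ _ _⟩
  | 3, 5 => ⟨![(0 : ℝ), (0 : ℝ), (0 : ℝ), (0 : ℝ), (6 : ℝ), (0 : ℝ), (0 : ℝ), (0 : ℝ)], fun x => key _ _ _ _⟩
  | 3, 6 => ⟨![(0 : ℝ), (0 : ℝ), (0 : ℝ), (0 : ℝ), (0 : ℝ), (0 : ℝ), (0 : ℝ), (0 : ℝ)], fun x => key _ _ _ _⟩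
  | 3, 7 => ⟨![(0 : ℝ), (0 : ℝ), (0 : ℝ), (6 : ℝ), (0 : ℝ), (0 : ℝ), (0 : ℝ), (0 : ℝ)], fun x => key _ _ _ _⟩
  | 4, 0 => ⟨![(0 : ℝ), (0 : ℝ), (0 : ℝ), (0 : ℝ), (0 : ℝ), (-6 : ℝ), (0 : ℝ), (0 : ℝ)], fun x => key _ _ _ _⟩
  | 4, 1 => ⟨![(0 : ℝ), (0 : ℝ), (0 : ℝ), (0 : ℝ), (0 : ℝ), (0 : ℝ), (-6 : ℝ), (-6 : ℝ)], fun x => key _ _ _ _⟩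
  | 4, 2 => ⟨![(0 : ℝ), (0 : ℝ), (0 : ℝ), (6 : ℝ), (0 : ℝ), (0 : ℝ), (0 : ℝ), (0 : ℝ)], fun x => key _ _ _ _⟩
  | 4, 3 => ⟨![(0 : ℝ), (0 : ℝ), (0 : ℝ), (0 : ℝ), (0 : ℝ), (0 : ℝ), (0 : ℝ), (0 : ℝ)], fun x => key _ _ _ _⟩
  | 4, 4 => ⟨![(0 : ℝ), (0 : ℝ), (0 : ℝ), (0 : ℝ), (0 : ℝ), (0 : ℝ), (0 : ℝ), (0 : ℝ)], fun x => key _ _ _ _⟩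
  | 4, 5 => ⟨![(0 : ℝ), (0 : ℝ), (0 : ℝ), (0 : ℝ), (0 : ℝ), (0 : ℝ), (0 : ℝ), (0 : ℝ)], fun x => key _ _ _ _⟩
  | 4, 6 => ⟨![(0 : ℝ), (0 : ℝ), (0 : ℝ), (0 : ℝ), (6 : ℝ), (0 : ℝ), (0 : ℝ), (0 : ℝ)], fun x => key _ _ _ _⟩
  | 4, 7 => ⟨![(0 : ℝ), (0 : ℝ), (0 : ℝ), (0 : ℝ), (6 : ℝ), (0 : ℝ), (0 : ℝ), (0 : ℝ)], fun x => key _ _ _ _⟩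
  | 5, 0 => ⟨![(0 : ℝ), (0 : ℝ), (0 : ℝ), (0 : ℝ), (0 : ℝ), (0 : ℝ), (0 : ℝ), (0 : ℝ)], fun x => key _ _ _ _⟩
  | 5, 1 => ⟨![(6 : ℝ), (0 : ℝ), (0 : ℝ), (0 : ℝ), (0 : ℝ), (0 : ℝ), (0 : ℝ), (0 : ℝ)], fun x => key _ _ _ _⟩
  | 5, 2 => ⟨![(0 : ℝ), (0 : ℝ), (0 : ℝ), (0 : ℝ), (0 : ℝ), (0 : ℝ), (-12 : ℝ), (6 : ℝ)], fun x => key _ _ _ _⟩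
  | 5, 3 => ⟨![(0 : ℝ), (0 : ℝ), (0 : ℝ), (0 : ℝ), (-6 : ℝ), (0 : ℝ), (0 : ℝ), (0 : ℝ)], fun x => key _ _ _ _⟩
  | 5, 4 => ⟨![(0 : ℝ), (0 : ℝ), (0 : ℝ), (0 : ℝ), (0 : ℝ), (0 : ℝ), (0 : ℝ), (0 : ℝ)], fun x => key _ _ _ _⟩
  | 5, 5 => ⟨![(0 : ℝ), (0 : ℝ), (0 : ℝ), (0 : ℝ), (0 : ℝ), (0 : ℝ), (0 : ℝ), (0 : ℝ)], fun x => key _ _ _ _⟩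
  | 5, 6 => ⟨![(0 : ℝ), (0 : ℝ), (0 : ℝ), (0 : ℝ), (0 : ℝ), (6 : ℝ), (0 : ℝ), (0 : ℝ)], fun x => key _ _ _ _⟩
  | 5, 7 => ⟨![(0 : ℝ), (0 : ℝ), (0 : ℝ), (0 : ℝ), (0 : ℝ), (0 : ℝ), (0 : ℝ), (0 : ℝ)], fun x => key _ _ _ _⟩
  | 6, 0 => ⟨![(0 : ℝ), (0 : ℝ), (0 : ℝ), (0 : ℝ), (0 : ℝ), (0 : ℝ), (0 : ℝ), (0 : ℝ)], fun x => key _ _ _ _⟩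
  | 6, 1 => ⟨![(0 : ℝ), (6 : ℝ), (0 : ℝ), (0 : ℝ), (0 : ℝ), (0 : ℝ), (0 : ℝ), (0 : ℝ)], fun x => key _ _ _ _⟩
  | 6, 2 => ⟨![(0 : ℝ), (0 : ℝ), (6 : ℝ), (0 : ℝ), (0 : ℝ), (0 : ℝ), (0 : ℝ), (0 : ℝ)], fun x => key _ _ _ _⟩
  | 6, 3 => ⟨![(0 : ℝ), (0 : ℝ), (0 : ℝ), (0 : ℝ), (0 : ℝ), (0 : ℝ), (0 : ℝ), (0 : ℝ)], fun x => key _ _ _ _⟩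
  | 6, 4 => ⟨![(0 : ℝ), (0 : ℝ), (0 : ℝ), (0 : ℝ), (-6 : ℝ), (0 : ℝ), (0 : ℝ), (0 : ℝ)], fun x => key _ _ _ _⟩
  | 6, 5 => ⟨![(0 : ℝ), (0 : ℝ), (0 : ℝ), (0 : ℝ), (0 : ℝ), (-6 : ℝ), (0 : ℝ), (0 : ℝ)], fun x => key _ _ _ _⟩
  | 6, 6 => ⟨![(0 : ℝ), (0 : ℝ), (0 : ℝ), (0 : ℝ), (0 : ℝ), (0 : ℝ), (0 : ℝ), (0 : ℝ)], fun x => key _ _ _ _⟩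
  | 6, 7 => ⟨![(0 : ℝ), (0 : ℝ), (0 : ℝ), (0 : ℝ), (0 : ℝ), (0 : ℝ), (0 : ℝ), (0 : ℝ)], fun x => key _ _ _ _⟩
  | 7, 0 => ⟨![(6 : ℝ), (0 : ℝ), (0 : ℝ), (0 : ℝ), (0 : ℝ), (0 : ℝ), (0 : ℝ), (0 : ℝ)], fun x => key _ _ _ _⟩
  | 7, 1 => ⟨![(0 : ℝ), (6 : ℝ), (0 : ℝ), (0 : ℝ), (0 : ℝ), (0 : ℝ), (0 : ℝ), (0 : ℝ)], fun x => key _ _ _ _⟩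
  | 7, 2 => ⟨![(0 : ℝ), (0 : ℝ), (0 : ℝ), (0 : ℝ), (0 : ℝ), (0 : ℝ), (0 : ℝ), (0 : ℝ)], fun x => key _ _ _ _⟩
  | 7, 3 => ⟨![(0 : ℝ), (0 : ℝ), (0 : ℝ), (-6 : ℝ), (0 : ℝ), (0 : ℝ), (0 : ℝ), (0 : ℝ)], fun x => key _ _ _ _⟩
  | 7, 4 => ⟨![(0 : ℝ), (0 : ℝ), (0 : ℝ), (0 : ℝ), (-6 : ℝ), (0 : ℝ), (0 : ℝ), (0 : ℝ)], fun x => key _ _ _ _⟩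
  | 7, 5 => ⟨![(0 : ℝ), (0 : ℝ), (0 : ℝ), (0 : ℝ), (0 : ℝ), (0 : ℝ), (0 : ℝ), (0 : ℝ)], fun x => key _ _ _ _⟩
  | 7, 6 => ⟨![(0 : ℝ), (0 : ℝ), (0 : ℝ), (0 : ℝ), (0 : ℝ), (0 : ℝ), (0 : ℝ), (0 : ℝ)], fun x => key _ _ _ _⟩
  | 7, 7 => ⟨![(0 : ℝ), (0 : ℝ), (0 : ℝ), (0 : ℝ), (0 : ℝ), (0 : ℝ), (0 : ℝ), (0 : ℝ)], fun x => key _ _ _ _⟩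

private lemma part2 : ∀ a : Fin 8 → ℝ, (∀ x : Fin 4 → ℝ, ∑ k, a k • slFields k x = 0) → a = 0 := by
  intro a h
  have h0 := congrFun (h ![0,0,0,0])
  have h1 := congrFun (h ![1,0,0,0])
  have h2 := congrFun (h ![0,1,0,0])
  have h3 := congrFun (h ![0,0,1,0])
  have h4 := congrFun (h ![0,0,0,1])
  have e1 := h0 0; have e2 := h0 1
  have e3 := h1 1; have e4 := h2 0
  have e5 := h3 2; have e6 := h4 3
  have e7 := h1 0; have e8 := h2 1
  simp only [Finset.sum_apply, Fin.sum_univ_eight, Pi.smul_apply, smul_eq_mul, slFields,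
    Matrix.cons_val_zero, Matrix.cons_val_one, Matrix.head_cons, Matrix.cons_val_two,
    Matrix.tail_cons, Matrix.cons_val_three, cons_val_four', cons_val_five', cons_val_six',
    cons_val_seven', Pi.zero_apply, Fin.isValue] at e1 e2 e3 e4 e5 e6 e7 e8
  norm_num at e1 e2 e3 e4 e5 e6 e7 e8
  have a0 : a 0 = 0 := by linarith
  have a1 : a 1 = 0 := by linarith
  have a2 : a 2 = 0 := by linarith
  have a5 : a 5 = 0 := by linarith
  have a6 : a 6 = 0 := by linarith
  have a7 : a 7 = 0 := by linarith
  have a3 : a 3 = 0 := by linarith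
  have a4 : a 4 = 0 := by linarith
  funext i
  fin_cases i
  · exact a0
  · exact a1
  · exact a2
  · exact a3
  · exact a4
  · exact a5
  · exact a6
  · exact a7

/-- the eight vector fields L¹,…,L⁶,H₁,H₂ are closed under the Lie
bracket (each bracket is a real linear combination of the eight), and they are
linearly independent over ℝ, so they span an 8-dimensional Lie algebra. -/
theorem stmt8 :
    (∀ i j : Fin 8, ∃ a : Fin 8 → ℝ, ∀ x : Fin 4 → ℝ,
        vfBracket (slFields i) (slFields j) x = ∑ k, a k • slFields k x) ∧
    (∀ a : Fin 8 → ℝ, (∀ x : Fin 4 → ℝ, ∑ k, a k • slFields k x = 0) → a = 0) :=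
  ⟨part1, part2⟩
end
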